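/- Let F₁, F₂, L₂ be distributions on ℝ such that \bar{F₂}(x) ~ \bar{L₂}(x) as x → ∞ and the convolution F₁ * F₂ is long-tailed. Then \overline{F₁ * L₂}(x) ~ \overline{F₁ * F₂}(x) as x → ∞, and consequently F₁ * L₂ is long-tailed. -/

import Mathlib

/-!
For every `K > 1`, each of the tails of `F₂` and `L₂` is at most `K` times a fixed shift of the
other: far out by the asymptotic equivalence, and elsewhere because shifting far enough towards
`-∞` brings the other tail above `1 / K`. Convolving with `F₁` preserves such bounds. Since
`F₁ * F₂` is long-tailed, a fixed shift changes its tail by a factor tending to `1`, so the ratio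
of the two convolution tails is squeezed to `1`; and long-tailedness passes to any distribution
with an asymptotically equivalent tail.
-/

open MeasureTheory Filter Set Asymptotics

/-- Tail function of a distribution: `F̄(x) = μ(x, ∞)`. -/
noncomputable def tail (μ : Measure ℝ) (x : ℝ) : ℝ := (μ (Set.Ioi x)).toReal

/-- `F(a, b] = F(b) - F(a)`. -/
noncomputable def intv (μ : Measure ℝ) (a b : ℝ) : ℝ := (μ (Set.Ioc a b)).toReal

/-- A distribution is long-tailed if `F̄(x+1)/F̄(x) → 1` as `x → ∞`. -/
def LongTailed (μ : Measure ℝ) : Prop :=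
  Tendsto (fun x => tail μ (x + 1) / tail μ x) atTop (nhds 1)

/-- Convolution of two distributions on ℝ (law of the sum of independent rvs). -/
noncomputable def mconv (μ ν : Measure ℝ) : Measure ℝ :=
  Measure.map (fun p : ℝ × ℝ => p.1 + p.2) (μ.prod ν)

/-- `n`-fold convolution of a distribution with itself; `nconv μ 0` is the unit mass at 0. -/
noncomputable def nconv (μ : Measure ℝ) : ℕ → Measure ℝ
  | 0 => Measure.dirac 0
  | n + 1 => mconv (nconv μ n) μ

open scoped Topology

lemma tail_nonneg (μ : Measure ℝ) (x : ℝ) : 0 ≤ tail μ x := ENNReal.toReal_nonneg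

lemma tail_antitone (μ : Measure ℝ) [IsFiniteMeasure μ] : Antitone (tail μ) := fun _ _ hab =>
  ENNReal.toReal_mono (measure_ne_top μ _) (measure_mono (Ioi_subset_Ioi hab))

lemma tail_le_one (μ : Measure ℝ) [IsProbabilityMeasure μ] (x : ℝ) : tail μ x ≤ 1 :=
  ENNReal.toReal_le_of_le_ofReal zero_le_one (by simpa using prob_le_one)

lemma ofReal_tail (μ : Measure ℝ) [IsFiniteMeasure μ] (x : ℝ) :
    ENNReal.ofReal (tail μ x) = μ (Ioi x) :=
  ENNReal.ofReal_toReal (measure_ne_top μ _)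

lemma tendsto_tail_atBot (μ : Measure ℝ) [IsProbabilityMeasure μ] :
    Tendsto (tail μ) atBot (𝓝 1) := by
  have h := tendsto_measure_iUnion_atBot (μ := μ) antitone_Ioi
  rw [iUnion_Ioi, measure_univ] at h
  exact (ENNReal.tendsto_toReal ENNReal.one_ne_top).comp h

lemma mconv_apply_Ioi (μ ν : Measure ℝ) [SFinite ν] (x : ℝ) :
    mconv μ ν (Ioi x) = ∫⁻ y, ν (Ioi (x - y)) ∂μ := by
  have hadd : Measurable fun p : ℝ × ℝ => p.1 + p.2 := measurable_fst.add measurable_snd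
  rw [mconv, Measure.map_apply hadd measurableSet_Ioi, Measure.prod_apply (hadd measurableSet_Ioi)]
  refine lintegral_congr fun y => congrArg ν ?_
  ext z
  simp [sub_lt_iff_lt_add']

instance isFiniteMeasure_mconv (μ ν : Measure ℝ) [IsFiniteMeasure μ] [IsFiniteMeasure ν] :
    IsFiniteMeasure (mconv μ ν) := by
  unfold mconv; infer_instance

lemma tail_mconv_le_mul_tail_mconv_sub (μ ν η : Measure ℝ) [IsFiniteMeasure μ] [IsFiniteMeasure ν]
    [IsFiniteMeasure η] {K c : ℝ} (hK : 0 ≤ K) (h : ∀ w, tail ν w ≤ K * tail η (w - c))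
    (x : ℝ) : tail (mconv μ ν) x ≤ K * tail (mconv μ η) (x - c) := by
  have hle : mconv μ ν (Ioi x) ≤ ENNReal.ofReal K * mconv μ η (Ioi (x - c)) := by
    rw [mconv_apply_Ioi, mconv_apply_Ioi, ← lintegral_const_mul' _ _ ENNReal.ofReal_ne_top]
    refine lintegral_mono fun y => ?_
    rw [← ofReal_tail, ← ofReal_tail, ← ENNReal.ofReal_mul hK, sub_right_comm]
    exact ENNReal.ofReal_le_ofReal (h (x - y))
  calc tail (mconv μ ν) x ≤ (ENNReal.ofReal K * mconv μ η (Ioi (x - c))).toReal :=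
        ENNReal.toReal_mono (ENNReal.mul_ne_top ENNReal.ofReal_ne_top (measure_ne_top _ _)) hle
    _ = K * tail (mconv μ η) (x - c) := by rw [ENNReal.toReal_mul, ENNReal.toReal_ofReal hK, tail]

lemma eventually_tail_le_mul_of_tendsto_div {μ ν : Measure ℝ}
    (h : Tendsto (fun x => tail μ x / tail ν x) atTop (𝓝 1)) {K : ℝ} (hK : 1 < K) :
    ∀ᶠ x in atTop, tail μ x ≤ K * tail ν x := by
  filter_upwards [h.eventually (eventually_lt_nhds hK),
    h.eventually (eventually_gt_nhds zero_lt_one)] with x hlt hpos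
  have hν : 0 < tail ν x := (tail_nonneg ν x).lt_of_ne fun h0 => by simp [← h0] at hpos
  exact (div_le_iff₀ hν).1 hlt.le

lemma exists_tail_le_mul_tail_sub {μ ν : Measure ℝ} [IsProbabilityMeasure μ]
    [IsProbabilityMeasure ν] {K : ℝ} (hK : 1 < K) (h : ∀ᶠ x in atTop, tail μ x ≤ K * tail ν x) :
    ∃ c, ∀ x, tail μ x ≤ K * tail ν (x - c) := by
  obtain ⟨t, ht⟩ := eventually_atTop.1 h
  have hlarge : ∀ᶠ b in atBot, 1 < K * tail ν b :=
    ((tendsto_tail_atBot ν).const_mul K).eventually (eventually_gt_nhds (by simpa using hK))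
  obtain ⟨b, hb, hbt⟩ := (hlarge.and (eventually_le_atBot t)).exists
  refine ⟨t - b, fun x => ?_⟩
  rcases le_or_gt t x with hx | hx
  · exact (ht x hx).trans (by gcongr; exact tail_antitone ν (by linarith))
  · calc tail μ x ≤ 1 := tail_le_one μ x
      _ ≤ K * tail ν b := hb.le
      _ ≤ K * tail ν (x - (t - b)) := by gcongr; exact tail_antitone ν (by linarith)

lemma tendsto_nhds_one_of_forall_inv_lt_lt {α : Type*} {l : Filter α} {f : α → ℝ}
    (h : ∀ K > 1, ∀ᶠ x in l, K⁻¹ < f x ∧ f x < K) : Tendsto f l (𝓝 1) := by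
  refine tendsto_order.2 ⟨fun a ha => ?_, fun b hb => (h b hb).mono fun x hx => hx.2⟩
  obtain ⟨q, hq, hq1⟩ := exists_between (max_lt ha zero_lt_one)
  have hq0 : 0 < q := (le_max_right a 0).trans_lt hq
  refine (h q⁻¹ ((one_lt_inv₀ hq0).2 hq1)).mono fun x hx => ?_
  rw [inv_inv] at hx
  exact (le_max_left a 0).trans_lt (hq.trans hx.1)

namespace LongTailed

variable {μ : Measure ℝ} [IsFiniteMeasure μ]

lemma tail_pos (h : LongTailed μ) (x : ℝ) : 0 < tail μ x := by
  by_contra! hx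
  have hzero : ∀ y ≥ x, tail μ y = 0 := fun y hy =>
    le_antisymm ((tail_antitone μ hy).trans hx) (tail_nonneg μ y)
  have h0 : Tendsto (fun _ : ℝ => (0 : ℝ)) atTop (𝓝 1) :=
    h.congr' (by filter_upwards [eventually_ge_atTop x] with y hy; simp [hzero y hy])
  exact zero_ne_one (tendsto_nhds_unique tendsto_const_nhds h0)

lemma tendsto_tail_add_nat_div (h : LongTailed μ) (n : ℕ) :
    Tendsto (fun x => tail μ (x + n) / tail μ x) atTop (𝓝 1) := by
  induction n with
  | zero => simp [div_self (h.tail_pos _).ne']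
  | succ n ih =>
    have hstep := h.comp (tendsto_atTop_add_const_right atTop (n : ℝ) tendsto_id)
    have hprod : Tendsto (fun x => tail μ (x + n + 1) / tail μ (x + n) *
        (tail μ (x + n) / tail μ x)) atTop (𝓝 1) := by simpa using hstep.mul ih
    refine hprod.congr fun x => ?_
    simp only [Nat.cast_succ, ← add_assoc]
    rw [div_mul_div_cancel₀ (h.tail_pos _).ne']

lemma tendsto_tail_add_div (h : LongTailed μ) (c : ℝ) :
    Tendsto (fun x => tail μ (x + c) / tail μ x) atTop (𝓝 1) := by
  obtain ⟨n, hn⟩ := exists_nat_ge |c|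
  have hc := abs_le.1 hn
  have hsub : Tendsto (fun x => tail μ (x - n) / tail μ x) atTop (𝓝 1) := by
    have := ((h.tendsto_tail_add_nat_div n).comp
      (tendsto_atTop_add_const_right atTop (-n : ℝ) tendsto_id)).inv₀ one_ne_zero
    simpa [← sub_eq_add_neg] using this
  refine tendsto_of_tendsto_of_tendsto_of_le_of_le (h.tendsto_tail_add_nat_div n) hsub
    (fun x => ?_) (fun x => ?_) <;>
  exact div_le_div_of_nonneg_right (tail_antitone μ (by linarith)) (tail_nonneg μ x)

lemma of_tendsto_tail_div {ν : Measure ℝ} (hμ : LongTailed μ)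
    (h : Tendsto (fun x => tail ν x / tail μ x) atTop (𝓝 1)) : LongTailed ν := by
  have hprod : Tendsto (fun x => tail ν (x + 1) / tail μ (x + 1) * (tail μ (x + 1) / tail μ x) /
      (tail ν x / tail μ x)) atTop (𝓝 1) := by
    simpa [Pi.div_def] using
      ((h.comp (tendsto_atTop_add_const_right atTop 1 tendsto_id)).mul hμ).div h one_ne_zero
  refine hprod.congr fun x => ?_
  rw [div_mul_div_cancel₀ (hμ.tail_pos _).ne', div_div_div_cancel_right₀ (hμ.tail_pos _).ne']

end LongTailed

theorem tendsto_tail_mconv_div_of_tendsto_tail_div {μ ν η : Measure ℝ} [IsFiniteMeasure μ]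
    [IsProbabilityMeasure ν] [IsProbabilityMeasure η] (hμν : LongTailed (mconv μ ν))
    (h : Tendsto (fun x => tail ν x / tail η x) atTop (𝓝 1)) :
    Tendsto (fun x => tail (mconv μ η) x / tail (mconv μ ν) x) atTop (𝓝 1) := by
  set S := tail (mconv μ η)
  set T := tail (mconv μ ν)
  refine tendsto_nhds_one_of_forall_inv_lt_lt fun K hK => ?_
  set k := √K
  have hk : 1 < k := by rw [Real.lt_sqrt zero_le_one]; simpa using hK
  have hkk : k * k = K := Real.mul_self_sqrt (by linarith)
  have h' : Tendsto (fun x => tail η x / tail ν x) atTop (𝓝 1) := by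
    simpa using h.inv₀ one_ne_zero
  obtain ⟨c₁, hc₁⟩ := exists_tail_le_mul_tail_sub hk (eventually_tail_le_mul_of_tendsto_div h' hk)
  obtain ⟨c₂, hc₂⟩ := exists_tail_le_mul_tail_sub hk (eventually_tail_le_mul_of_tendsto_div h hk)
  have hS : ∀ x, S x ≤ k * T (x + -c₁) := fun x => by
    simpa [← sub_eq_add_neg] using tail_mconv_le_mul_tail_mconv_sub μ η ν (by linarith) hc₁ x
  have hT : ∀ x, T (x + c₂) ≤ k * S x := fun x => by
    simpa using tail_mconv_le_mul_tail_mconv_sub μ ν η (by linarith) hc₂ (x + c₂)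
  filter_upwards [(hμν.tendsto_tail_add_div (-c₁)).eventually (eventually_lt_nhds hk),
    (hμν.tendsto_tail_add_div c₂).eventually (eventually_gt_nhds (inv_lt_one_of_one_lt₀ hk))]
    with x h₁ h₂
  have hTx := hμν.tail_pos x
  constructor
  · calc K⁻¹ = k⁻¹ * k⁻¹ := by rw [← hkk, mul_inv]
      _ < k⁻¹ * (T (x + c₂) / T x) := by gcongr
      _ ≤ S x / T x := by
        rw [← mul_div_assoc]
        gcongr
        exact (inv_mul_le_iff₀ (by linarith)).2 (hT x)
  · calc S x / T x ≤ k * (T (x + -c₁) / T x) := by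
          rw [← mul_div_assoc]
          gcongr
          exact hS x
      _ < k * k := by gcongr
      _ = K := hkk

/-- If tail F2 is asymptotically equivalent to tail L2 and F1 * F2 is long-tailed, then
the tail of F1 * L2 is asymptotically equivalent to that of F1 * F2, and consequently
F1 * L2 is long-tailed. -/
theorem stmt7 (F₁ F₂ L₂ : Measure ℝ)
    [IsProbabilityMeasure F₁] [IsProbabilityMeasure F₂] [IsProbabilityMeasure L₂]
    (hequiv : Tendsto (fun x => tail F₂ x / tail L₂ x) atTop (nhds 1))
    (hL : LongTailed (mconv F₁ F₂)) :
    Tendsto (fun x => tail (mconv F₁ L₂) x / tail (mconv F₁ F₂) x) atTop (nhds 1) ∧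
      LongTailed (mconv F₁ L₂) := by
  have hratio := tendsto_tail_mconv_div_of_tendsto_tail_div hL hequiv
  exact ⟨hratio, hL.of_tendsto_tail_div hratio⟩
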